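/- On the reference tetrahedron K³, each face bubble function Φ^{f_{j1}}_{m,n} = C_m^n λ_{j2} λ_{j3} λ_{j4} (1−λ_{j2})^m (1−λ_{j2}−λ_{j3})^n P_m^{(2n+3,2)}(2λ_{j3}/(1−λ_{j2}) − 1) P_n^{(0,2)}(2λ_{j4}/(1−λ_{j2}−λ_{j3}) − 1) (∇λ_{j3} × ∇λ_{j4})/|∇λ_{j3} × ∇λ_{j4}| (m,n ≥ 0) satisfies: (i) it vanishes at every point of each of the six edges of K³; and (ii) its normal component vanishes on the other three faces, i.e. for every jk ≠ j1, n^{f_{jk}} · Φ^{f_{j1}}_{m,n} = 0 at every point of the face f_{jk}. -/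

import Mathlib

open MeasureTheory
open scoped BigOperators

noncomputable section

/-- Vertices of the reference tetrahedron:
`v0 = (0,0,0)`, `v1 = (1,0,0)`, `v2 = (0,1,0)`, `v3 = (0,0,1)`. -/
def vtx : Fin 4 → Fin 3 → ℝ := ![![0,0,0], ![1,0,0], ![0,1,0], ![0,0,1]]

/-- Barycentric coordinates `λ0 = 1−ξ−η−ζ`, `λ1 = ξ`, `λ2 = η`, `λ3 = ζ`. -/
def lam : Fin 4 → (Fin 3 → ℝ) → ℝ :=
  ![fun p => 1 - p 0 - p 1 - p 2, fun p => p 0, fun p => p 1, fun p => p 2]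

/-- The (constant) gradients `∇λ_i`. -/
def gradLam : Fin 4 → Fin 3 → ℝ := ![![-1,-1,-1], ![1,0,0], ![0,1,0], ![0,0,1]]

/-- The reference tetrahedron `K³ = {(ξ,η,ζ) : ξ,η,ζ ≥ 0, ξ+η+ζ ≤ 1}`. -/
def K3 : Set (Fin 3 → ℝ) := {p | 0 ≤ p 0 ∧ 0 ≤ p 1 ∧ 0 ≤ p 2 ∧ p 0 + p 1 + p 2 ≤ 1}

/-- Cross product in ℝ³. -/
def cross3 (u v : Fin 3 → ℝ) : Fin 3 → ℝ :=
  ![u 1 * v 2 - u 2 * v 1, u 2 * v 0 - u 0 * v 2, u 0 * v 1 - u 1 * v 0]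

/-- Euclidean norm in ℝ³. -/
def norm3 (u : Fin 3 → ℝ) : ℝ := Real.sqrt (∑ i, u i ^ 2)

/-- Euclidean dot product in ℝ³. -/
def dot3 (u v : Fin 3 → ℝ) : ℝ := ∑ i, u i * v i

/-- The unit vector in the direction of `u`. -/
def unitV (u : Fin 3 → ℝ) : Fin 3 → ℝ := (norm3 u)⁻¹ • u

/-- The outward unit normal of the face `f_j` of `K³` opposite the vertex
`v_j` (that face lies in the plane `λ_j = 0`): `n^{f_j} = −∇λ_j / |∇λ_j|`. -/
def nFace (j : Fin 4) : Fin 3 → ℝ := (norm3 (gradLam j))⁻¹ • (-(gradLam j))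

/-- The classical (un-normalized) Jacobi polynomial `P_n^{(a,b)}` in homogenized
(cleared-denominator) form: `jacobiHom n a b u w = w^n P_n^{(a,b)}(u/w)` for
`w ≠ 0`, via the explicit sum
`P_n^{(a,b)}(x) = ∑_{s} C(n+a, n−s) C(n+b, s) ((x−1)/2)^s ((x+1)/2)^{n−s}`. -/
def jacobiHom (n a b : ℕ) (u w : ℝ) : ℝ :=
  ∑ k ∈ Finset.range (n+1),
    (((n+a).choose (n-k) : ℝ)) * (((n+b).choose k : ℝ)) *
      ((u - w)/2)^k * ((u + w)/2)^(n-k)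

/-- The degree-`n` Legendre polynomial `ℓ_n` (normalized so `ℓ_n(1) = 1`). -/
def legendre (n : ℕ) (x : ℝ) : ℝ := jacobiHom n 0 0 x 1

/-- Normalization constant
`C_m^n = √((2n+3)(m+n+3)(m+2n+4)(m+2n+5)(2m+2n+7)(2m+2n+8)(2m+2n+9)) / √((m+1)(m+2))`. -/
def Cmn (m n : ℕ) : ℝ :=
  Real.sqrt
    (((2*n+3)*(m+n+3)*(m+2*n+4)*(m+2*n+5)*(2*m+2*n+7)*(2*m+2*n+8)*(2*m+2*n+9) : ℕ) : ℝ) /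
  Real.sqrt (((m+1)*(m+2) : ℕ) : ℝ)

/-- Face bubble function
`Φ^{f_{j1}}_{m,n} = C_m^n λ_{j2} λ_{j3} λ_{j4} (1−λ_{j2})^m (1−λ_{j2}−λ_{j3})^n
P_m^{(2n+3,2)}(2λ_{j3}/(1−λ_{j2}) − 1) P_n^{(0,2)}(2λ_{j4}/(1−λ_{j2}−λ_{j3}) − 1)
(∇λ_{j3} × ∇λ_{j4})/|∇λ_{j3} × ∇λ_{j4}|`. -/
def faceBub (j2 j3 j4 : Fin 4) (m n : ℕ) (p : Fin 3 → ℝ) : Fin 3 → ℝ :=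
  (Cmn m n * lam j2 p * lam j3 p * lam j4 p *
    jacobiHom m (2*n+3) 2 (2 * lam j3 p - (1 - lam j2 p)) (1 - lam j2 p) *
    jacobiHom n 0 2 (2 * lam j4 p - (1 - lam j2 p - lam j3 p))
      (1 - lam j2 p - lam j3 p)) •
  unitV (cross3 (gradLam j3) (gradLam j4))

/-! Every face bubble of `f_{j1}` carries the factor `λ_{j2} λ_{j3} λ_{j4}`, so it vanishes
identically on the three faces `λ_j = 0`, `j ≠ j1`; in particular its normal component does.
Each edge of `K³` lies in the plane `λ_j = 0` of some `j ∉ {j1, a, b}`, hence in one of those faces. -/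

lemma lam_smul_add_smul (j : Fin 4) {u w : ℝ} (p q : Fin 3 → ℝ) (huw : u + w = 1) :
    lam j (u • p + w • q) = u * lam j p + w * lam j q := by
  obtain rfl : w = 1 - u := by linarith
  fin_cases j <;> simp [lam]
  ring

lemma lam_vtx_of_ne {j a : Fin 4} (h : j ≠ a) : lam j (vtx a) = 0 := by
  fin_cases j <;> fin_cases a <;> simp_all [lam, vtx]

lemma lam_eq_zero_of_mem_segment {j a b : Fin 4} (ha : j ≠ a) (hb : j ≠ b) {p : Fin 3 → ℝ}
    (hp : p ∈ segment ℝ (vtx a) (vtx b)) : lam j p = 0 := by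
  obtain ⟨u, w, -, -, huw, rfl⟩ := hp
  simp [lam_smul_add_smul j _ _ huw, lam_vtx_of_ne ha, lam_vtx_of_ne hb]

lemma faceBub_eq_zero_of_lam_eq_zero {j j2 j3 j4 : Fin 4} (hj : j = j2 ∨ j = j3 ∨ j = j4)
    (m n : ℕ) {p : Fin 3 → ℝ} (hp : lam j p = 0) : faceBub j2 j3 j4 m n p = 0 := by
  rcases hj with rfl | rfl | rfl <;> simp [faceBub, hp]

lemma Fin4.exists_ne_ne_ne (i a b : Fin 4) : ∃ j, j ≠ i ∧ j ≠ a ∧ j ≠ b := by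
  revert i a b; decide

lemma Fin4.eq_or_eq_or_eq_of_ne {j j1 j2 j3 j4 : Fin 4} (h2 : j2 ≠ j1) (h3 : j3 ≠ j1)
    (h4 : j4 ≠ j1) (h23 : j2 ≠ j3) (h24 : j2 ≠ j4) (h34 : j3 ≠ j4) (hj : j ≠ j1) :
    j = j2 ∨ j = j3 ∨ j = j4 := by
  revert j j1 j2 j3 j4; decide

/-- each face bubble function attached to the face
`f_{j1} = [j2,j3,j4]` (i) vanishes at every point of each of the six edges of
`K³`, and (ii) has vanishing normal component at every point of every face
`f_{jk}` with `jk ≠ j1`. -/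
theorem stmt13 : ∀ (j1 j2 j3 j4 : Fin 4), j2 ≠ j1 → j3 ≠ j1 → j4 ≠ j1 →
    j2 < j3 → j3 < j4 → ∀ m n : ℕ,
    (∀ (a b : Fin 4), a < b → ∀ p ∈ segment ℝ (vtx a) (vtx b),
      faceBub j2 j3 j4 m n p = 0) ∧
    (∀ jk : Fin 4, jk ≠ j1 → ∀ p ∈ K3, lam jk p = 0 →
      dot3 (nFace jk) (faceBub j2 j3 j4 m n p) = 0) := by
  intro j1 j2 j3 j4 h2 h3 h4 h23 h34 m n
  have vanish_on_face : ∀ j, j ≠ j1 → ∀ p, lam j p = 0 → faceBub j2 j3 j4 m n p = 0 :=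
    fun j hj _ hp => faceBub_eq_zero_of_lam_eq_zero
      (Fin4.eq_or_eq_or_eq_of_ne h2 h3 h4 h23.ne (h23.trans h34).ne h34.ne hj) m n hp
  refine ⟨fun a b _ p hp => ?_, fun jk hjk p _ hp => ?_⟩
  · obtain ⟨j, hj1, ha, hb⟩ := Fin4.exists_ne_ne_ne j1 a b
    exact vanish_on_face j hj1 p (lam_eq_zero_of_mem_segment ha hb hp)
  · simp [vanish_on_face jk hjk p hp, dot3]
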